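/- Identify the alphabet {0, 1, $} with Fin 3, where $ denotes the letter 2 and a word or trace is called binary if it never uses the letter $. For an arbitrary set X of binary finite words, define the trace property L_X over Fin 3 as the union of (i) the set of all binary infinite traces, and (ii) the set of infinite traces of the form 0^{|x|} ++ [$] ++ x ++ [$] followed by a binary infinite trace, for some x ∈ X (where 0^{|x|} is the list consisting of length-of-x many 0's). Then: (a) L_X is a safety property; and (b) for every binary finite word x, the finite word 0^{|x|} ++ [$] ++ x ++ [$] is a bad prefix of L_X if and only if x ∉ X. -/

import Mathlib

/-- A finite word `w` is a prefix of an infinite trace `t`. -/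
def IsPrefixOf {α : Type*} (w : List α) (t : ℕ → α) : Prop :=
  ∀ i : ℕ, ∀ h : i < w.length, t i = w.get ⟨i, h⟩

/-- `w` is a bad prefix of the trace property `L`. -/
def TraceBadPrefix {α : Type*} (L : Set (ℕ → α)) (w : List α) : Prop :=
  ∀ t : ℕ → α, IsPrefixOf w t → t ∉ L

/-- `L` is a safety trace property. -/
def TraceSafety {α : Type*} (L : Set (ℕ → α)) : Prop :=
  ∀ t : ℕ → α, t ∉ L → ∃ w : List α, IsPrefixOf w t ∧ TraceBadPrefix L w

/-- The infinite trace obtained by following the finite word `w` with the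
infinite trace `s`. -/
def catOmega {α : Type*} (w : List α) (s : ℕ → α) : ℕ → α :=
  fun n => if h : n < w.length then w.get ⟨n, h⟩ else s (n - w.length)

/-- A finite word over `Fin 3` is binary if it never uses the letter `$` (= `2`). -/
def BinaryWord (w : List (Fin 3)) : Prop := ∀ a ∈ w, a ≠ 2

/-- An infinite trace over `Fin 3` is binary if it never uses the letter `$` (= `2`). -/
def BinaryTrace (t : ℕ → Fin 3) : Prop := ∀ i, t i ≠ 2

/-- The safety language `L_X` built from a set `X` of binary finite words:
all binary infinite traces, together with all traces of the form
`0^{|x|} $ x $ ⋅ σ` for `x ∈ X` and a binary infinite trace `σ`. -/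
def LX (X : Set (List (Fin 3))) : Set (ℕ → Fin 3) :=
  {t | BinaryTrace t} ∪
    {t | ∃ x ∈ X, ∃ s : ℕ → Fin 3, BinaryTrace s ∧
      t = catOmega (List.replicate x.length 0 ++ [2] ++ x ++ [2]) s}

/-! ### Auxiliary definitions and lemmas -/

def wd (x : List (Fin 3)) : List (Fin 3) :=
  List.replicate x.length 0 ++ [2] ++ x ++ [2]

lemma wd_length (x : List (Fin 3)) : (wd x).length = 2 * x.length + 2 := by
  simp [wd]; ring

lemma wd_get_lt (x : List (Fin 3)) {i : ℕ} (hi : i < x.length)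
    (h : i < (wd x).length) : (wd x)[i] = 0 := by
  simp only [wd]
  rw [List.getElem_append_left (by simp; omega), List.getElem_append_left (by simp; omega),
    List.getElem_append_left (by simpa using hi), List.getElem_replicate]

lemma wd_get_n (x : List (Fin 3)) (h : x.length < (wd x).length) :
    (wd x)[x.length] = 2 := by
  simp only [wd]
  rw [List.getElem_append_left (by simp), List.getElem_append_left (by simp),
    List.getElem_append_right (by simp)]
  simp

lemma wd_get_mid (x : List (Fin 3)) {j : ℕ} (hj : j < x.length)
    (h : x.length + 1 + j < (wd x).length) : (wd x)[x.length + 1 + j] = x[j] := by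
  simp only [wd]
  rw [List.getElem_append_left (by simp; omega), List.getElem_append_right (by simp)]
  congr 1
  simp

lemma wd_get_last (x : List (Fin 3)) (h : 2 * x.length + 1 < (wd x).length) :
    (wd x)[2 * x.length + 1] = 2 := by
  simp only [wd]
  rw [List.getElem_append_right (by simp; omega)]
  simp

lemma co_lt (x : List (Fin 3)) (s : ℕ → Fin 3) {i : ℕ} (hi : i < x.length) :
    catOmega (wd x) s i = 0 := by
  have h : i < (wd x).length := by rw [wd_length]; omega
  simp only [catOmega, dif_pos h, List.get_eq_getElem]
  exact wd_get_lt x hi h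

lemma co_n (x : List (Fin 3)) (s : ℕ → Fin 3) :
    catOmega (wd x) s x.length = 2 := by
  have h : x.length < (wd x).length := by rw [wd_length]; omega
  simp only [catOmega, dif_pos h, List.get_eq_getElem]
  exact wd_get_n x h

lemma co_mid (x : List (Fin 3)) (s : ℕ → Fin 3) {j : ℕ} (hj : j < x.length) :
    catOmega (wd x) s (x.length + 1 + j) = x[j] := by
  have h : x.length + 1 + j < (wd x).length := by rw [wd_length]; omega
  simp only [catOmega, dif_pos h, List.get_eq_getElem]
  exact wd_get_mid x hj h

lemma co_last (x : List (Fin 3)) (s : ℕ → Fin 3) :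
    catOmega (wd x) s (2 * x.length + 1) = 2 := by
  have h : 2 * x.length + 1 < (wd x).length := by rw [wd_length]; omega
  simp only [catOmega, dif_pos h, List.get_eq_getElem]
  exact wd_get_last x h

lemma co_tail (x : List (Fin 3)) (s : ℕ → Fin 3) (k : ℕ) :
    catOmega (wd x) s (2 * x.length + 2 + k) = s k := by
  have h : ¬ (2 * x.length + 2 + k < (wd x).length) := by rw [wd_length]; omega
  simp only [catOmega, dif_neg h]
  congr 1
  rw [wd_length]; omega

lemma co_two (x : List (Fin 3)) (s : ℕ → Fin 3) (hx : BinaryWord x)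
    (hs : BinaryTrace s) (i : ℕ) :
    catOmega (wd x) s i = 2 ↔ i = x.length ∨ i = 2 * x.length + 1 := by
  constructor
  · intro h
    by_contra hc
    push_neg at hc
    have hcase : i < x.length ∨ (x.length + 1 ≤ i ∧ i < 2 * x.length + 1) ∨
        2 * x.length + 2 ≤ i := by omega
    rcases hcase with h1 | h2 | h3
    · rw [co_lt x s h1] at h; exact absurd h (by decide)
    · obtain ⟨j, hj, rfl⟩ : ∃ j, j < x.length ∧ i = x.length + 1 + j :=
        ⟨i - (x.length + 1), by omega, by omega⟩
      rw [co_mid x s hj] at h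
      exact hx _ (List.getElem_mem _) h
    · obtain ⟨k, rfl⟩ : ∃ k, i = 2 * x.length + 2 + k := ⟨i - (2 * x.length + 2), by omega⟩
      rw [co_tail x s k] at h
      exact hs k h
  · rintro (rfl | rfl)
    · exact co_n x s
    · exact co_last x s

lemma agree_of_prefix {t u : ℕ → Fin 3} {N : ℕ}
    (h : IsPrefixOf (List.ofFn fun i : Fin N => t i) u) : ∀ i < N, u i = t i := by
  intro i hi
  have := h i (by simpa using hi)
  rw [this, List.get_ofFn]
  simp

lemma prefix_ofFn (t : ℕ → Fin 3) (N : ℕ) :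
    IsPrefixOf (List.ofFn fun i : Fin N => t i) t := by
  intro i h
  rw [List.get_ofFn]
  simp

lemma wd_get_n' (x : List (Fin 3)) {i : ℕ} (hi : i = x.length)
    (h : i < (wd x).length) : (wd x)[i] = 2 := by
  subst hi; exact wd_get_n x h

lemma wd_get_mid' (x : List (Fin 3)) {i j : ℕ} (hj : j < x.length)
    (hi : i = x.length + 1 + j) (h : i < (wd x).length) : (wd x)[i] = x[j] := by
  subst hi; exact wd_get_mid x hj h

lemma wd_get_last' (x : List (Fin 3)) {i : ℕ} (hi : i = 2 * x.length + 1)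
    (h : i < (wd x).length) : (wd x)[i] = 2 := by
  subst hi; exact wd_get_last x h

/-- Main engine: if `u ∈ LX X` agrees with `t` on `[0, N)`, and the first `2` of `t`
is at position `n < N`, then `u` has the canonical form with `y.length = n`. -/
lemma form_of_prefix {X : Set (List (Fin 3))} (hX : ∀ x ∈ X, BinaryWord x)
    {t u : ℕ → Fin 3} {n N : ℕ} (hu : u ∈ LX X) (hnN : n < N)
    (agree : ∀ i < N, u i = t i) (htn : t n = 2) (hmin : ∀ i < n, t i ≠ 2) :
    ∃ y ∈ X, ∃ s : ℕ → Fin 3, BinaryWord y ∧ BinaryTrace s ∧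
      u = catOmega (wd y) s ∧ y.length = n := by
  have hun : u n = 2 := by rw [agree n hnN]; exact htn
  rcases hu with hb | ⟨y, hyX, s, hs, hequ⟩
  · exact absurd hun (hb n)
  · have hequ : u = catOmega (wd y) s := hequ
    have hy : BinaryWord y := hX y hyX
    have htwo := co_two y s hy hs
    rw [hequ] at hun
    have h1 : n = y.length ∨ n = 2 * y.length + 1 := (htwo n).mp hun
    have hm : y.length = n := by
      by_contra hne
      have hlt : y.length < n := by omega
      have : u y.length = 2 := by rw [hequ]; exact co_n y s
      rw [agree _ (by omega)] at this
      exact hmin _ hlt this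
    exact ⟨y, hyX, s, hy, hs, hequ, hm⟩

lemma partb (X : Set (List (Fin 3))) (hX : ∀ x ∈ X, BinaryWord x) :
    ∀ x : List (Fin 3), BinaryWord x →
      (TraceBadPrefix (LX X) (wd x) ↔ x ∉ X) := by
  intro x hx
  constructor
  · intro hbad hxX
    have hs0 : BinaryTrace (fun _ => (0 : Fin 3)) := by
      intro i
      show (0 : Fin 3) ≠ 2
      decide
    refine hbad (catOmega (wd x) fun _ => 0) ?_ (Or.inr ⟨x, hxX, _, hs0, rfl⟩)
    intro i h
    simp only [catOmega, dif_pos h]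
  · intro hxX u hpre hu
    have agree : ∀ i, ∀ _ : i < 2 * x.length + 2,
        u i = (wd x)[i]'(by rw [wd_length]; omega) := by
      intro i hi
      have := hpre i (by rw [wd_length]; omega)
      rwa [List.get_eq_getElem] at this
    have hun : u x.length = 2 := by
      rw [agree x.length (by omega)]; exact wd_get_n x (by rw [wd_length]; omega)
    have hmin : ∀ i < x.length, u i ≠ 2 := by
      intro i hi
      rw [agree i (by omega), wd_get_lt x hi]
      decide
    obtain ⟨y, hyX, s, hy, hs, hequ, hm⟩ :=
      form_of_prefix hX hu (Nat.lt_succ_self x.length) (fun i _ => rfl) hun hmin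
    apply hxX
    have hxy : x = y := by
      apply List.ext_getElem (by omega)
      intro j h1 h2
      have hmid : u (x.length + 1 + j) = y[j] := by
        rw [hequ, show x.length + 1 + j = y.length + 1 + j by omega]
        exact co_mid y s (by omega)
      rw [agree (x.length + 1 + j) (by omega)] at hmid
      rw [← hmid]
      exact (wd_get_mid x h1 (by rw [wd_length]; omega)).symm
    rw [hxy]; exact hyX

theorem stmt19 (X : Set (List (Fin 3))) (hX : ∀ x ∈ X, BinaryWord x) :
    TraceSafety (LX X) ∧
      ∀ x : List (Fin 3), BinaryWord x →
        (TraceBadPrefix (LX X) (List.replicate x.length 0 ++ [2] ++ x ++ [2]) ↔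
          x ∉ X) := by
  refine ⟨?_, partb X hX⟩
  intro t ht
  have hnb : ¬ BinaryTrace t := fun h => ht (Or.inl h)
  have hek : ∃ k, t k = 2 := by
    by_contra h
    push_neg at h
    exact hnb h
  set n := Nat.find hek with hndef
  have htn : t n = 2 := Nat.find_spec hek
  have hmin : ∀ i < n, t i ≠ 2 := fun i hi => Nat.find_min hek hi
  by_cases hA : ∀ j < n, t j = 0
  · by_cases hB : ∃ j, n < j ∧ j < 2 * n + 1 ∧ t j = 2
    · obtain ⟨j, hj1, hj2, hj3⟩ := hB
      refine ⟨List.ofFn fun i : Fin (j + 1) => t i, prefix_ofFn t (j + 1), ?_⟩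
      intro u hpre hu
      obtain ⟨y, hyX, s, hy, hs, hequ, hm⟩ :=
        form_of_prefix hX hu (show n < j + 1 by omega) (agree_of_prefix hpre) htn hmin
      have huj : u j = 2 := by rw [agree_of_prefix hpre j (by omega)]; exact hj3
      rw [hequ, co_two y s hy hs, hm] at huj
      omega
    · push_neg at hB
      set x : List (Fin 3) := List.ofFn fun i : Fin n => t (n + 1 + i) with hxdef
      have hxlen : x.length = n := by simp [hxdef]
      have hxbin : BinaryWord x := by
        intro a ha
        rw [hxdef, List.mem_ofFn] at ha
        obtain ⟨i, rfl⟩ := ha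
        exact hB (n + 1 + i) (by omega) (by omega)
      by_cases hC : t (2 * n + 1) = 2
      · -- t starts with wd x
        have hpre : IsPrefixOf (wd x) t := by
          intro i h
          rw [List.get_eq_getElem]
          show t i = (wd x)[i]
          have h' : i < 2 * n + 2 := by
            have := h; rw [wd_length, hxlen] at this; exact this
          have hcase : i < n ∨ i = n ∨ (n + 1 ≤ i ∧ i < 2 * n + 1) ∨ i = 2 * n + 1 := by omega
          rcases hcase with h1 | rfl | h2 | rfl
          · rw [wd_get_lt x (by omega)]
            exact hA i h1
          · rw [wd_get_n' x (by omega)]; exact htn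
          · obtain ⟨j, hj, rfl⟩ : ∃ j, j < n ∧ i = n + 1 + j :=
              ⟨i - (n + 1), by omega, by omega⟩
            rw [wd_get_mid' x (j := j) (by omega) (by omega)]
            simp [hxdef]
          · rw [wd_get_last' x (by omega)]; exact hC
        by_cases hx : x ∈ X
        · -- tail must be non-binary
          have hne : ¬ BinaryTrace (fun k => t (2 * n + 2 + k)) := by
            intro hbs
            apply ht
            right
            refine ⟨x, hx, _, hbs, ?_⟩
            funext i
            show t i = catOmega (wd x) _ i
            unfold catOmega
            split
            · next h => exact hpre i h
            · next h =>
              rw [wd_length, hxlen] at h ⊢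
              show t i = t (2 * n + 2 + (i - (2 * n + 2)))
              congr 1
              omega
          have hek2 : ∃ k, t (2 * n + 2 + k) = 2 := by
            by_contra h
            push_neg at h
            exact hne h
          obtain ⟨k, hk⟩ := hek2
          refine ⟨List.ofFn fun i : Fin (2 * n + 3 + k) => t i, prefix_ofFn t _, ?_⟩
          intro u hpre2 hu
          obtain ⟨y, hyX, s, hy, hs, hequ, hm⟩ :=
            form_of_prefix hX hu (show n < 2 * n + 3 + k by omega)
              (agree_of_prefix hpre2) htn hmin
          have huk : u (2 * n + 2 + k) = 2 := by
            rw [agree_of_prefix hpre2 _ (by omega)]; exact hk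
          rw [hequ, co_two y s hy hs, hm] at huk
          omega
        · exact ⟨wd x, hpre, (partb X hX x hxbin).mpr hx⟩
      · refine ⟨List.ofFn fun i : Fin (2 * n + 2) => t i, prefix_ofFn t _, ?_⟩
        intro u hpre hu
        obtain ⟨y, hyX, s, hy, hs, hequ, hm⟩ :=
          form_of_prefix hX hu (show n < 2 * n + 2 by omega) (agree_of_prefix hpre) htn hmin
        have : u (2 * n + 1) = 2 := by
          rw [hequ, co_two y s hy hs, hm]; omega
        rw [agree_of_prefix hpre _ (by omega)] at this
        exact hC this
  · push_neg at hA
    obtain ⟨j, hj, hj0⟩ := hA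
    refine ⟨List.ofFn fun i : Fin (n + 1) => t i, prefix_ofFn t _, ?_⟩
    intro u hpre hu
    obtain ⟨y, hyX, s, hy, hs, hequ, hm⟩ :=
      form_of_prefix hX hu (Nat.lt_succ_self n) (agree_of_prefix hpre) htn hmin
    have : u j = 0 := by rw [hequ]; exact co_lt y s (by omega)
    rw [agree_of_prefix hpre j (by omega)] at this
    exact hj0 this
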